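/- arXiv:math/0502096 — 3 statements merged into one kernel-verified Lean document; each statement's English description precedes it below -/
import Mathlib

section
/- Let p > 2, C > 0, g ≥ 0, and λ ∈ (0, 1). Consider h(r) = ((1−λ)/2) r² − (C/p) r^p − (λ/2) g² for r ≥ 0. Then for λ₁ := min{1/2, (1/(2g²))(1/2 − 1/p) r₀²} with r₀ := (1/(2C))^{1/(p−2)} (taking λ₁ = 1/2 if g = 0), and R := ((1−λ₁)/C)^{1/(p−2)}, one has: for all λ ∈ (0, λ₁), h(R) ≥ (λ₁/2) g² > 0 provided g > 0. -/
/-! `R` is chosen so that `C R^{p-2} = 1 - λ₁`, which turns the nonlinear term `(C/p) R^p` into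
`((1 - λ₁)/p) R²`; since `λ ≤ λ₁ ≤ 1/2` the quadratic part then dominates `(1/2)(1/2 - 1/p) R²`.
As `R ≥ r₀`, this is at least `(1/2)(1/2 - 1/p) r₀² ≥ λ₁ g²` by the choice of `λ₁`, and the
`λ g²/2 ≤ λ₁ g²/2` loss leaves `λ₁ g²/2`. -/

open Real

lemma rpow_one_div_sub_two_pow {x p : ℝ} (hx : 0 < x) (hp : p ≠ 2) :
    (x ^ (1 / (p - 2))) ^ p = (x ^ (1 / (p - 2))) ^ 2 * x := by
  have hp2 : p - 2 ≠ 0 := sub_ne_zero.mpr hp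
  have hexp : 1 / (p - 2) * p = 1 / (p - 2) * (2 : ℕ) + 1 := by
    push_cast
    field_simp
    ring
  rw [← rpow_natCast (x ^ (1 / (p - 2))) 2, ← rpow_mul hx.le, ← rpow_mul hx.le, hexp,
    rpow_add hx, rpow_one]

lemma one_div_two_sub_one_div_nonneg {p : ℝ} (hp : 2 ≤ p) : 0 ≤ 1 / 2 - 1 / p :=
  sub_nonneg.mpr (one_div_le_one_div_of_le two_pos hp)

lemma min_half_mul_sq_le {g c : ℝ} (hg : g ≠ 0) :
    min (1 / 2) (1 / (2 * g ^ 2) * c) * g ^ 2 ≤ 1 / 2 * c := by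
  have hg2 : 0 < g ^ 2 := by positivity
  calc min (1 / 2) (1 / (2 * g ^ 2) * c) * g ^ 2 ≤ 1 / (2 * g ^ 2) * c * g ^ 2 :=
        mul_le_mul_of_nonneg_right (min_le_right _ _) hg2.le
    _ = 1 / 2 * c := by field_simp

lemma quadratic_sub_power_ge {p C μ lam g r₀ R : ℝ} (hp : 2 ≤ p) (hC : C ≠ 0)
    (hμ : μ ≤ 1 / 2) (hlam : lam ≤ μ) (hr₀ : 0 ≤ r₀) (hr₀R : r₀ ≤ R)
    (hRp : R ^ p = R ^ 2 * ((1 - μ) / C)) :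
    1 / 2 * (1 / 2 - 1 / p) * r₀ ^ 2 - μ / 2 * g ^ 2 ≤
      (1 - lam) / 2 * R ^ 2 - C / p * R ^ p - lam / 2 * g ^ 2 := by
  have hs := one_div_two_sub_one_div_nonneg hp
  have hpower : C / p * R ^ p = (1 - μ) / p * R ^ 2 := by
    rw [hRp]
    field_simp
  have hcoef : 1 / 2 * (1 / 2 - 1 / p) ≤ (1 - lam) / 2 - (1 - μ) / p := by
    have : 1 / 2 * (1 / 2 - 1 / p) ≤ (1 - μ) * (1 / 2 - 1 / p) :=
      mul_le_mul_of_nonneg_right (by linarith) hs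
    have hsplit : (1 - μ) * (1 / 2 - 1 / p) = (1 - μ) / 2 - (1 - μ) / p := by ring
    linarith
  have hsq : r₀ ^ 2 ≤ R ^ 2 := pow_le_pow_left₀ hr₀ hr₀R 2
  have hquad : 1 / 2 * (1 / 2 - 1 / p) * r₀ ^ 2 ≤ ((1 - lam) / 2 - (1 - μ) / p) * R ^ 2 :=
    mul_le_mul hcoef hsq (by positivity) (by linarith)
  have hg : lam / 2 * g ^ 2 ≤ μ / 2 * g ^ 2 := by gcongr
  linarith

theorem stmt_3_general (p C g : ℝ) (hp : 2 < p) (hC : 0 < C) :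
    let r₀ : ℝ := (1 / (2 * C)) ^ (1 / (p - 2))
    let lam₁ : ℝ := if g = 0 then 1 / 2
      else min (1 / 2) ((1 / (2 * g ^ 2)) * (1 / 2 - 1 / p) * r₀ ^ 2)
    let R : ℝ := ((1 - lam₁) / C) ^ (1 / (p - 2))
    let h : ℝ → ℝ → ℝ := fun lam r =>
      (1 - lam) / 2 * r ^ 2 - C / p * r ^ p - lam / 2 * g ^ 2
    ∀ lam : ℝ, 0 < lam → lam < lam₁ →
      h lam R ≥ lam₁ / 2 * g ^ 2 ∧ (0 < g → 0 < lam₁ / 2 * g ^ 2) := by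
  intro r₀ lam₁ R h lam hlam hlam₁
  have hlam₁_le : lam₁ ≤ 1 / 2 := by
    unfold lam₁
    split_ifs
    exacts [le_rfl, min_le_left _ _]
  have hlam₁_g : lam₁ * g ^ 2 ≤ 1 / 2 * (1 / 2 - 1 / p) * r₀ ^ 2 := by
    unfold lam₁
    split_ifs with hg
    · rw [hg, zero_pow two_ne_zero, mul_zero]
      have := one_div_two_sub_one_div_nonneg hp.le
      positivity
    · simpa only [mul_assoc] using min_half_mul_sq_le (c := (1 / 2 - 1 / p) * r₀ ^ 2) hg
  have hbase : 1 / (2 * C) ≤ (1 - lam₁) / C := by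
    rw [div_le_div_iff₀ (by positivity) hC]
    nlinarith
  have hexp : 0 ≤ 1 / (p - 2) := one_div_nonneg.mpr (by linarith)
  have hr₀R : r₀ ≤ R := rpow_le_rpow (by positivity) hbase hexp
  have hRp : R ^ p = R ^ 2 * ((1 - lam₁) / C) :=
    rpow_one_div_sub_two_pow ((by positivity : (0 : ℝ) < 1 / (2 * C)).trans_le hbase) hp.ne'
  refine ⟨?_, fun hg => by have := hlam.trans hlam₁; positivity⟩
  have := quadratic_sub_power_ge (g := g) hp.le hC.ne' hlam₁_le hlam₁.le (by positivity) hr₀R hRp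
  show lam₁ / 2 * g ^ 2 ≤ (1 - lam) / 2 * R ^ 2 - C / p * R ^ p - lam / 2 * g ^ 2
  linarith

theorem stmt_3 (p C g : ℝ) (hp : 2 < p) (hC : 0 < C) (hg : 0 ≤ g) :
    let r₀ : ℝ := (1 / (2 * C)) ^ (1 / (p - 2))
    let lam₁ : ℝ := if g = 0 then 1 / 2
      else min (1 / 2) ((1 / (2 * g ^ 2)) * (1 / 2 - 1 / p) * r₀ ^ 2)
    let R : ℝ := ((1 - lam₁) / C) ^ (1 / (p - 2))
    let h : ℝ → ℝ → ℝ := fun lam r =>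
      (1 - lam) / 2 * r ^ 2 - C / p * r ^ p - lam / 2 * g ^ 2
    ∀ lam : ℝ, 0 < lam → lam < lam₁ →
      h lam R ≥ lam₁ / 2 * g ^ 2 ∧ (0 < g → 0 < lam₁ / 2 * g ^ 2) :=
  stmt_3_general p C g hp hC
end

section
/- Let H be a real Hilbert space and F : H → ℝ a C¹ functional that is bounded below on the closed ball B̄_R = {u : ‖u‖ ≤ R}, and suppose there exists δ > 0 with F(u) ≥ δ for all u with ‖u‖ = R while inf_{B̄_R} F ≤ 0. Then there exists a sequence (u_n) ⊂ B̄_R with ‖u_n‖ < R for large n, F(u_n) → inf_{B̄_R} F, and ‖F'(u_n)‖ → 0. -/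
/-!
Ekeland's variational principle with `ε = 1 / (n + 1)`, started at a `1 / (n + 1)`-minimizer,
gives points `uₙ` of the ball with `F uₙ → inf F` and `F uₙ ≤ F w + ‖w - uₙ‖ / (n + 1)` on the
ball. Since `inf F ≤ 0 < δ ≤ F` on the sphere, `uₙ` eventually lies in the open ball, where that
inequality holds on a neighbourhood of `uₙ` and so forces `‖F' uₙ‖ ≤ 1 / (n + 1)`.
-/

open Filter Set Topology

theorem LowerSemicontinuousWithinAt.le_of_tendsto {α ι : Type*} [TopologicalSpace α]
    {f : α → ℝ} {s : Set α} {x : α} {l : Filter ι} [l.NeBot] {a : ι → α} {L : ℝ}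
    (hf : LowerSemicontinuousWithinAt f s x) (ha : Tendsto a l (𝓝[s] x))
    (hfa : Tendsto (f ∘ a) l (𝓝 L)) : f x ≤ L :=
  le_of_forall_lt_imp_le_of_dense fun _ hy =>
    ge_of_tendsto hfa ((ha.eventually (hf _ hy)).mono fun _ => le_of_lt)

theorem exists_mem_forall_lt_add {α : Type*} {f : α → ℝ} {s : Set α} (hs : s.Nonempty)
    (hbdd : BddBelow (f '' s)) {δ : ℝ} (hδ : 0 < δ) : ∃ w ∈ s, ∀ z ∈ s, f w < f z + δ := by
  obtain ⟨_, ⟨w, hw, rfl⟩, hlt⟩ :=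
    exists_lt_of_csInf_lt (hs.image f) (lt_add_of_pos_right (sInf (f '' s)) hδ)
  exact ⟨w, hw, fun z hz => hlt.trans_le (by gcongr; exact csInf_le hbdd ⟨z, hz, rfl⟩)⟩

section Ekeland

variable {X : Type*} [PseudoMetricSpace X]

def EkelandLE (F : X → ℝ) (ε : ℝ) (w u : X) : Prop :=
  F w + ε * dist w u ≤ F u

variable {F : X → ℝ} {ε : ℝ}

namespace EkelandLE

theorem refl (u : X) : EkelandLE F ε u u := by
  simp [EkelandLE]

theorem le (hε : 0 ≤ ε) {w u : X} (h : EkelandLE F ε w u) : F w ≤ F u := by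
  unfold EkelandLE at h
  nlinarith [dist_nonneg (x := w) (y := u)]

theorem trans (hε : 0 ≤ ε) {w u z : X} (hwu : EkelandLE F ε w u) (huz : EkelandLE F ε u z) :
    EkelandLE F ε w z := by
  unfold EkelandLE at *
  nlinarith [dist_triangle w u z]

variable {a : ℕ → X}

theorem of_forall_succ_of_le (hε : 0 ≤ ε) (ha : ∀ n, EkelandLE F ε (a (n + 1)) (a n)) {n m : ℕ}
    (hnm : n ≤ m) : EkelandLE F ε (a m) (a n) := by
  induction m, hnm using Nat.le_induction with
  | base => exact refl _
  | succ m _ ih => exact (ha m).trans hε ih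

theorem cauchySeq_of_forall_succ (hε : 0 < ε) (ha : ∀ n, EkelandLE F ε (a (n + 1)) (a n))
    {L : ℝ} (hL : Tendsto (F ∘ a) atTop (𝓝 L)) : CauchySeq a := by
  have hanti : Antitone (F ∘ a) := antitone_nat_of_succ_le fun n => (ha n).le hε.le
  refine cauchySeq_of_le_tendsto_0' (fun n => (F (a n) - L) / ε) (fun n m hnm => ?_) ?_
  · have hchain := of_forall_succ_of_le hε.le ha hnm
    have hLm : L ≤ F (a m) := hanti.le_of_tendsto hL m
    unfold EkelandLE at hchain
    rw [le_div_iff₀ hε, dist_comm]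
    linarith
  · simpa using (hL.sub_const L).div_const ε

theorem exists_forall_of_forall_succ [CompleteSpace X] {K : Set X} (hK : IsClosed K)
    (hF : LowerSemicontinuousOn F K) (hbdd : BddBelow (F '' K)) (hε : 0 < ε)
    (haK : ∀ n, a n ∈ K) (ha : ∀ n, EkelandLE F ε (a (n + 1)) (a n)) :
    ∃ v ∈ K, ∀ n, EkelandLE F ε v (a n) := by
  have hanti : Antitone (F ∘ a) := antitone_nat_of_succ_le fun n => (ha n).le hε.le
  have hL := tendsto_atTop_ciInf hanti
    (hbdd.mono (range_subset_iff.2 fun n => mem_image_of_mem F (haK n)))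
  set L := ⨅ n, F (a n)
  obtain ⟨v, hv⟩ := cauchySeq_tendsto_of_complete (cauchySeq_of_forall_succ hε ha hL)
  have hvK : v ∈ K := hK.mem_of_tendsto hv (Eventually.of_forall haK)
  have hFv : F v ≤ L :=
    LowerSemicontinuousWithinAt.le_of_tendsto (hF v hvK)
      (tendsto_nhdsWithin_iff.2 ⟨hv, Eventually.of_forall haK⟩) hL
  refine ⟨v, hvK, fun n => ?_⟩
  have hdist : ε * dist v (a n) ≤ F (a n) - L := by
    refine le_of_tendsto ((hv.dist tendsto_const_nhds).const_mul ε)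
      (eventually_atTop.2 ⟨n, fun m hnm => ?_⟩)
    have hchain := of_forall_succ_of_le hε.le ha hnm
    have hLm : L ≤ F (a m) := hanti.le_of_tendsto hL m
    unfold EkelandLE at hchain
    linarith
  unfold EkelandLE
  linarith

end EkelandLE

/-- Ekeland's variational principle. -/
theorem exists_forall_le_add_dist [CompleteSpace X] {K : Set X} (hK : IsClosed K)
    (hF : LowerSemicontinuousOn F K) (hbdd : BddBelow (F '' K)) (hε : 0 < ε) {x₀ : X}
    (hx₀ : x₀ ∈ K) : ∃ v ∈ K, F v ≤ F x₀ ∧ ∀ w ∈ K, F v ≤ F w + ε * dist w v := by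
  let S : X → Set X := fun u => {w ∈ K | EkelandLE F ε w u}
  have step (n : ℕ) (u : X) (hu : u ∈ K) : ∃ w ∈ S u, ∀ z ∈ S u, F w < F z + 1 / (n + 1) :=
    exists_mem_forall_lt_add (⟨u, hu, .refl u⟩ : (S u).Nonempty)
      (hbdd.mono (image_mono (sep_subset _ _))) (by positivity)
  choose! next hnextS hnext using step
  let a : ℕ → X := fun n => Nat.rec x₀ next n
  have haK : ∀ n, a n ∈ K := fun n => Nat.rec hx₀ (fun n ih => (hnextS n _ ih).1) n
  have ha : ∀ n, EkelandLE F ε (a (n + 1)) (a n) := fun n => (hnextS n _ (haK n)).2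
  obtain ⟨v, hvK, hv⟩ := EkelandLE.exists_forall_of_forall_succ hK hF hbdd hε haK ha
  refine ⟨v, hvK, (hv 0).le hε.le, fun w hwK => ?_⟩
  by_contra! hw
  -- `w` lies below every `a n`, hence competes in the choice of every `a (n + 1)`.
  have hwv : EkelandLE F ε w v := hw.le
  have hvw (n : ℕ) : F v ≤ F w + 1 / (n + 1) :=
    ((hv (n + 1)).le hε.le).trans (hnext n _ (haK n) w ⟨hwK, hwv.trans hε.le (hv n)⟩).le
  have hlim : Tendsto (fun n : ℕ => F w + 1 / (n + 1)) atTop (𝓝 (F w)) := by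
    simpa using tendsto_const_nhds.add (tendsto_one_div_add_atTop_nhds_zero_nat (𝕜 := ℝ))
  have := ge_of_tendsto hlim (Eventually.of_forall hvw)
  have := mul_nonneg hε.le (dist_nonneg (x := w) (y := v))
  linarith

theorem exists_seq_tendsto_sInf_forall_le_add_dist [CompleteSpace X] {K : Set X}
    (hK : IsClosed K) (hF : LowerSemicontinuousOn F K) (hbdd : BddBelow (F '' K))
    (hne : K.Nonempty) :
    ∃ u : ℕ → X, (∀ n, u n ∈ K) ∧ Tendsto (F ∘ u) atTop (𝓝 (sInf (F '' K))) ∧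
      ∀ n, ∀ w ∈ K, F (u n) ≤ F w + 1 / (n + 1) * dist w (u n) := by
  have (n : ℕ) : ∃ v ∈ K, F v < sInf (F '' K) + 1 / (n + 1) ∧
      ∀ w ∈ K, F v ≤ F w + 1 / (n + 1) * dist w v := by
    obtain ⟨_, ⟨x₀, hx₀, rfl⟩, hlt⟩ := exists_lt_of_csInf_lt (hne.image F)
      (lt_add_of_pos_right (sInf (F '' K)) n.one_div_pos_of_nat)
    obtain ⟨v, hvK, hvx₀, hv⟩ := exists_forall_le_add_dist hK hF hbdd n.one_div_pos_of_nat hx₀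
    exact ⟨v, hvK, hvx₀.trans_lt hlt, hv⟩
  choose u huK hFu hu using this
  refine ⟨u, huK, ?_, hu⟩
  refine tendsto_of_tendsto_of_tendsto_of_le_of_le tendsto_const_nhds ?_
    (fun n => csInf_le hbdd ⟨u n, huK n, rfl⟩) (fun n => (hFu n).le)
  simpa using tendsto_const_nhds.add (tendsto_one_div_add_atTop_nhds_zero_nat (𝕜 := ℝ))

end Ekeland

section Derivative

variable {E : Type*} [NormedAddCommGroup E] [NormedSpace ℝ E] {F : E → ℝ} {u : E} {ε : ℝ}

theorem neg_mul_norm_le_fderiv_apply (hF : DifferentiableAt ℝ F u)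
    (hmin : ∀ᶠ w in 𝓝 u, F u ≤ F w + ε * ‖w - u‖) (h : E) :
    -(ε * ‖h‖) ≤ fderiv ℝ F u h := by
  -- On the ray `u + t • h`, `t ≥ 0`, the penalty `ε * ‖w - u‖` is linear in `t`.
  set φ : ℝ → ℝ := fun t => F (u + t • h) + ε * ‖h‖ * t
  have hline : HasDerivAt (fun t : ℝ => u + t • h) h 0 := by
    simpa using ((hasDerivAt_id (0 : ℝ)).smul_const h).const_add u
  have hφ : HasDerivAt φ (fderiv ℝ F u h + ε * ‖h‖) 0 := by
    refine (hF.hasFDerivAt.comp_hasDerivAt_of_eq 0 hline (by simp)).add ?_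
    simpa using (hasDerivAt_id (0 : ℝ)).const_mul (ε * ‖h‖)
  have hφmin : IsLocalMinOn φ (Ici 0) 0 := by
    have : Tendsto (fun t : ℝ => u + t • h) (𝓝 0) (𝓝 u) := by
      simpa using hline.continuousAt.tendsto
    filter_upwards [self_mem_nhdsWithin, nhdsWithin_le_nhds (this.eventually hmin)]
      with t (ht : 0 ≤ t) hle
    simpa [φ, norm_smul, abs_of_nonneg ht, mul_comm, mul_left_comm, mul_assoc] using hle
  have := hφmin.hasFDerivWithinAt_nonneg hφ.hasFDerivAt.hasFDerivWithinAt (y := 1)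
    (mem_posTangentConeAt_of_segment_subset (by simp [segment_eq_Icc, Icc_subset_Ici_self]))
  simp only [ContinuousLinearMap.toSpanSingleton_apply, smul_eq_mul, one_mul] at this
  linarith

theorem norm_fderiv_le_of_eventually_le_add_norm_sub (hε : 0 ≤ ε) (hF : DifferentiableAt ℝ F u)
    (hmin : ∀ᶠ w in 𝓝 u, F u ≤ F w + ε * ‖w - u‖) : ‖fderiv ℝ F u‖ ≤ ε := by
  refine ContinuousLinearMap.opNorm_le_bound _ hε fun h => abs_le.2 ⟨?_, ?_⟩
  · exact neg_mul_norm_le_fderiv_apply hF hmin h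
  · simpa using neg_mul_norm_le_fderiv_apply hF hmin (-h)

end Derivative

theorem stmt_4 {H : Type*} [NormedAddCommGroup H] [InnerProductSpace ℝ H]
    [CompleteSpace H]
    (F : H → ℝ) (hF : ContDiff ℝ 1 F) (R : ℝ) (hR : 0 < R)
    (hbdd : BddBelow (F '' Metric.closedBall (0 : H) R))
    (δ : ℝ) (hδ : 0 < δ) (hsphere : ∀ u : H, ‖u‖ = R → δ ≤ F u)
    (hinf : sInf (F '' Metric.closedBall (0 : H) R) ≤ 0) :
    ∃ u : ℕ → H,
      (∀ n, ‖u n‖ ≤ R) ∧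
      (∃ N : ℕ, ∀ n ≥ N, ‖u n‖ < R) ∧
      Tendsto (fun n => F (u n)) atTop
        (nhds (sInf (F '' Metric.closedBall (0 : H) R))) ∧
      Tendsto (fun n => ‖fderiv ℝ F (u n)‖) atTop (nhds 0) := by
  obtain ⟨u, huK, hFu, hu⟩ := exists_seq_tendsto_sInf_forall_le_add_dist Metric.isClosed_closedBall
    (hF.continuous.lowerSemicontinuous.lowerSemicontinuousOn _) hbdd
    ⟨0, Metric.mem_closedBall_self hR.le⟩
  have huR (n : ℕ) : ‖u n‖ ≤ R := mem_closedBall_zero_iff.1 (huK n)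
  have hinterior : ∀ᶠ n in atTop, ‖u n‖ < R :=
    (hFu.eventually (gt_mem_nhds (hinf.trans_lt hδ))).mono fun n hn =>
      (huR n).lt_of_ne fun h => (hsphere _ h).not_gt hn
  refine ⟨u, huR, eventually_atTop.1 hinterior, hFu, ?_⟩
  refine squeeze_zero' (Eventually.of_forall fun n => norm_nonneg _) ?_
    tendsto_one_div_add_atTop_nhds_zero_nat
  filter_upwards [hinterior] with n hn
  refine norm_fderiv_le_of_eventually_le_add_norm_sub n.one_div_pos_of_nat.le
    (hF.differentiable one_ne_zero _) ?_
  filter_upwards [Metric.isOpen_ball.mem_nhds (mem_ball_zero_iff.2 hn)] with w hw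
  simpa [dist_eq_norm] using hu n w (Metric.ball_subset_closedBall hw)
end

section
/- With H, p, K₀, N, I, S as above, suppose the infimum S₀ = inf_{u ≠ 0} ‖u‖²/(K₀N(u))^{2/p} is achieved at some U with K₀ N(U) = 1. Then ū := S₀^{1/(p−2)} U belongs to S, I(ū) = (1/2 − 1/p) S₀^{p/(p−2)}, and inf_{u ∈ S} I(u) = I(ū) = sup_{t ≥ 0} I(t ū). -/
/-!
On `S` the two terms of `I` are tied together, so `I u = (1/2 - 1/p) ‖u‖²` there, and along
the ray through `u ∈ S` one has `I (t • u) = ‖u‖² (t²/2 - t^p/p)`, which is maximal at `t = 1`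
by the weighted AM-GM inequality. For `u ∈ S` the Sobolev quotient equals `(‖u‖²)^(1 - 2/p)`,
so `‖u‖² ≥ S₀^(p/(p-2))`; rescaling the minimizer `U` by `S₀^(1/(p-2))` balances the degree-2
term against the degree-`p` term and attains this bound.
-/

open Real

theorem sq_div_two_sub_rpow_div_le {p t : ℝ} (hp : 2 < p) (ht : 0 ≤ t) :
    t ^ 2 / 2 - t ^ p / p ≤ 1 / 2 - 1 / p := by
  have hp0 : 0 < p := by linarith
  have amgm := geom_mean_le_arith_mean2_weighted (w₁ := 2 / p) (w₂ := 1 - 2 / p)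
    (p₁ := t ^ p) (p₂ := 1) (by positivity)
    (by rw [sub_nonneg, div_le_one hp0]; linarith) (by positivity) zero_le_one (by ring)
  have hpow : (t ^ p) ^ (2 / p) = t ^ 2 := by
    rw [← rpow_mul ht, mul_div_cancel₀ _ hp0.ne', rpow_two]
  rw [hpow, one_rpow, mul_one, mul_one] at amgm
  linear_combination amgm / 2

theorem rpow_div_sub_two_le_of_le_div_rpow {p a S : ℝ} (hp : 2 < p) (ha : 0 < a) (hS : 0 ≤ S)
    (h : S ≤ a / a ^ (2 / p)) : S ^ (p / (p - 2)) ≤ a := by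
  have hp0 : 0 < p := by linarith
  have hp2 : 0 < p - 2 := by linarith
  rw [← rpow_one_sub' ha.le (sub_ne_zero.2 ((div_lt_one hp0).2 hp).ne')] at h
  calc S ^ (p / (p - 2)) ≤ (a ^ (1 - 2 / p)) ^ (p / (p - 2)) := by gcongr
    _ = a := by
      rw [← rpow_mul ha.le, show (1 - 2 / p) * (p / (p - 2)) = 1 by field_simp, rpow_one]

section Homogeneous

variable {E : Type*} [AddCommGroup E] [Module ℝ E] {p : ℝ} {N : E → ℝ}

variable (p N) in
def IsPosHomogeneous : Prop := ∀ t : ℝ, 0 < t → ∀ u : E, N (t • u) = t ^ p * N u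

theorem IsPosHomogeneous.map_zero (hN : IsPosHomogeneous p N) (hp : 0 < p) : N 0 = 0 := by
  have h := hN 2 two_pos 0
  rw [smul_zero] at h
  have : (1 : ℝ) < 2 ^ p := one_lt_rpow one_lt_two hp
  nlinarith

theorem IsPosHomogeneous.map_smul_of_nonneg (hN : IsPosHomogeneous p N) (hp : 0 < p) {t : ℝ}
    (ht : 0 ≤ t) (u : E) : N (t • u) = t ^ p * N u := by
  rcases ht.eq_or_lt with rfl | ht
  · rw [zero_smul, zero_rpow hp.ne', zero_mul, hN.map_zero hp]
  · exact hN t ht u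

end Homogeneous

section Energy

variable {E : Type*} [NormedAddCommGroup E] {p K₀ : ℝ} {N : E → ℝ}

variable (p K₀ N) in
noncomputable def energy (u : E) : ℝ := ‖u‖ ^ 2 / 2 - K₀ * N u / p

variable (K₀ N) in
def nehari : Set E := {u | u ≠ 0 ∧ ‖u‖ ^ 2 = K₀ * N u}

theorem energy_eq_of_mem_nehari {u : E} (hu : u ∈ nehari K₀ N) :
    energy p K₀ N u = (1 / 2 - 1 / p) * ‖u‖ ^ 2 := by
  rw [energy, ← hu.2]
  ring

theorem energy_smul_of_mem_nehari [NormedSpace ℝ E] (hp : 0 < p) (hN : IsPosHomogeneous p N)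
    {u : E} (hu : u ∈ nehari K₀ N) {t : ℝ} (ht : 0 ≤ t) :
    energy p K₀ N (t • u) = ‖u‖ ^ 2 * (t ^ 2 / 2 - t ^ p / p) := by
  rw [energy, hN.map_smul_of_nonneg hp ht, norm_smul, mul_pow, norm_eq_abs, sq_abs,
    mul_left_comm, ← hu.2]
  ring

theorem isGreatest_energy_smul_of_mem_nehari [NormedSpace ℝ E] (hp : 2 < p)
    (hN : IsPosHomogeneous p N) {u : E} (hu : u ∈ nehari K₀ N) :
    IsGreatest {y | ∃ t : ℝ, 0 ≤ t ∧ y = energy p K₀ N (t • u)} (energy p K₀ N u) := by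
  refine ⟨⟨1, zero_le_one, by rw [one_smul]⟩, ?_⟩
  rintro _ ⟨t, ht, rfl⟩
  rw [energy_smul_of_mem_nehari (by linarith) hN hu ht, energy_eq_of_mem_nehari hu, mul_comm]
  exact mul_le_mul_of_nonneg_right (sq_div_two_sub_rpow_div_le hp ht) (sq_nonneg _)

theorem sInf_le_norm_sq_div (hK₀ : 0 < K₀) (hNpos : ∀ u : E, u ≠ 0 → 0 < N u)
    {u : E} (hu : u ≠ 0) :
    sInf {y | ∃ u : E, u ≠ 0 ∧ y = ‖u‖ ^ 2 / (K₀ * N u) ^ (2 / p)} ≤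
      ‖u‖ ^ 2 / (K₀ * N u) ^ (2 / p) := by
  refine csInf_le ⟨0, ?_⟩ ⟨u, hu, rfl⟩
  rintro _ ⟨v, hv, rfl⟩
  have := hNpos v hv
  positivity

theorem rpow_le_norm_sq_of_mem_nehari (hp : 2 < p) {S : ℝ} (hS : 0 ≤ S) {u : E}
    (hu : u ∈ nehari K₀ N) (hSu : S ≤ ‖u‖ ^ 2 / (K₀ * N u) ^ (2 / p)) :
    S ^ (p / (p - 2)) ≤ ‖u‖ ^ 2 := by
  rw [← hu.2] at hSu
  have := norm_pos_iff.mpr hu.1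
  exact rpow_div_sub_two_le_of_le_div_rpow hp (by positivity) hS hSu

theorem norm_rpow_smul_sq [NormedSpace ℝ E] (hp : 2 < p) {s : ℝ} (hs : 0 < s) {U : E}
    (hU : ‖U‖ ^ 2 = s) :
    ‖s ^ (1 / (p - 2)) • U‖ ^ 2 = s ^ (p / (p - 2)) := by
  have hp2 : p - 2 ≠ 0 := by linarith
  rw [norm_smul, mul_pow, norm_eq_abs, sq_abs, hU, ← rpow_natCast, ← rpow_mul hs.le,
    ← rpow_add_one hs.ne']
  congr 1
  field_simp
  ring

theorem mul_map_rpow_smul [NormedSpace ℝ E] (hN : IsPosHomogeneous p N) {s : ℝ} (hs : 0 < s)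
    {U : E} (hU : K₀ * N U = 1) :
    K₀ * N (s ^ (1 / (p - 2)) • U) = s ^ (p / (p - 2)) := by
  rw [hN _ (rpow_pos_of_pos hs _), mul_left_comm, hU, mul_one, ← rpow_mul hs.le,
    one_div_mul_eq_div]

end Energy

theorem stmt_15_general {H : Type*} [NormedAddCommGroup H] [InnerProductSpace ℝ H]
    (p K₀ : ℝ) (hp : 2 < p) (hK₀ : 0 < K₀)
    (N : H → ℝ)
    (hNhom : ∀ t : ℝ, 0 < t → ∀ u : H, N (t • u) = t ^ p * N u)
    (hNpos : ∀ u : H, u ≠ 0 → 0 < N u)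
    (S₀ : ℝ)
    (hS₀ : S₀ = sInf {y : ℝ | ∃ u : H, u ≠ 0 ∧ y = ‖u‖ ^ 2 / (K₀ * N u) ^ (2 / p)})
    (U : H) (hU : U ≠ 0) (hUnorm : K₀ * N U = 1)
    (hUach : ‖U‖ ^ 2 / (K₀ * N U) ^ (2 / p) = S₀) :
    let I : H → ℝ := fun u => ‖u‖ ^ 2 / 2 - K₀ * N u / p
    let ubar : H := (S₀ ^ (1 / (p - 2))) • U
    (ubar ≠ 0 ∧ ‖ubar‖ ^ 2 = K₀ * N ubar) ∧
    I ubar = (1 / 2 - 1 / p) * S₀ ^ (p / (p - 2)) ∧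
    sInf {y : ℝ | ∃ u : H, (u ≠ 0 ∧ ‖u‖ ^ 2 = K₀ * N u) ∧ y = I u} = I ubar ∧
    sSup {y : ℝ | ∃ t : ℝ, 0 ≤ t ∧ y = I (t • ubar)} = I ubar := by
  intro I ubar
  have hS₀U : S₀ = ‖U‖ ^ 2 := by rw [← hUach, hUnorm, one_rpow, div_one]
  have hS₀pos : 0 < S₀ := hS₀U ▸ pow_pos (norm_pos_iff.mpr hU) 2
  have hnorm : ‖ubar‖ ^ 2 = S₀ ^ (p / (p - 2)) := norm_rpow_smul_sq hp hS₀pos hS₀U.symm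
  have hmem : ubar ∈ nehari K₀ N :=
    ⟨smul_ne_zero (rpow_pos_of_pos hS₀pos _).ne' hU,
      hnorm.trans (mul_map_rpow_smul hNhom hS₀pos hUnorm).symm⟩
  have hIubar : I ubar = (1 / 2 - 1 / p) * S₀ ^ (p / (p - 2)) :=
    hnorm ▸ energy_eq_of_mem_nehari hmem
  refine ⟨hmem, hIubar, IsLeast.csInf_eq ⟨⟨ubar, hmem, rfl⟩, ?_⟩,
    (isGreatest_energy_smul_of_mem_nehari hp hNhom hmem).csSup_eq⟩
  rintro _ ⟨u, hu, rfl⟩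
  have hbound := rpow_le_norm_sq_of_mem_nehari hp hS₀pos.le hu
    (hS₀ ▸ sInf_le_norm_sq_div hK₀ hNpos hu.1)
  have hcoef : 0 ≤ 1 / 2 - 1 / p := by
    rw [sub_nonneg]; gcongr
  change _ ≤ energy p K₀ N u
  rw [hIubar, energy_eq_of_mem_nehari hu]
  exact mul_le_mul_of_nonneg_left hbound hcoef

theorem stmt_15 {H : Type*} [NormedAddCommGroup H] [InnerProductSpace ℝ H]
    (p K₀ : ℝ) (hp : 2 < p) (hK₀ : 0 < K₀)
    (N : H → ℝ) (hNcont : Continuous N)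
    (hNhom : ∀ t : ℝ, 0 < t → ∀ u : H, N (t • u) = t ^ p * N u)
    (hNpos : ∀ u : H, u ≠ 0 → 0 < N u)
    (S₀ : ℝ)
    (hS₀ : S₀ = sInf {y : ℝ | ∃ u : H, u ≠ 0 ∧ y = ‖u‖ ^ 2 / (K₀ * N u) ^ (2 / p)})
    (U : H) (hU : U ≠ 0) (hUnorm : K₀ * N U = 1)
    (hUach : ‖U‖ ^ 2 / (K₀ * N U) ^ (2 / p) = S₀) :
    let I : H → ℝ := fun u => ‖u‖ ^ 2 / 2 - K₀ * N u / p
    let ubar : H := (S₀ ^ (1 / (p - 2))) • U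
    (ubar ≠ 0 ∧ ‖ubar‖ ^ 2 = K₀ * N ubar) ∧
    I ubar = (1 / 2 - 1 / p) * S₀ ^ (p / (p - 2)) ∧
    sInf {y : ℝ | ∃ u : H, (u ≠ 0 ∧ ‖u‖ ^ 2 = K₀ * N u) ∧ y = I u} = I ubar ∧
    sSup {y : ℝ | ∃ t : ℝ, 0 ≤ t ∧ y = I (t • ubar)} = I ubar :=
  stmt_15_general p K₀ hp hK₀ N hNhom hNpos S₀ hS₀ U hU hUnorm hUach
end
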